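/- arXiv:1608.00027 — 5 statements merged into one kernel-verified Lean document; each statement's English description precedes it below -/
import Mathlib

section
/- For the lasso problem min over ξ of (1/(2n))‖y − X̄ξ‖² + λ‖ξ‖₁ with λ > 0, if X̄_A has full column rank, where A = {i : |α̂_i| = 1} is the equicorrelation set of an optimal solution ξ̂ with subgradient vector α̂, then the lasso solution is unique. -/
open Finset

/-- If the equicorrelation submatrix `X̄_A` has full column rank,
the lasso solution is unique. -/
theorem lasso_unique_of_fullRank_equicorrelation
    {n m : ℕ} (X : Matrix (Fin n) (Fin m) ℝ) (y : Fin n → ℝ) (lam : ℝ)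
    (hlam : 0 < lam)
    (f : (Fin m → ℝ) → ℝ)
    (hf : ∀ ξ, f ξ = (1 / (2 * (n : ℝ))) * ∑ t, (y t - X.mulVec ξ t) ^ 2
        + lam * ∑ i, |ξ i|)
    (ξhat αhat : Fin m → ℝ)
    (hmin : ∀ ξ, f ξhat ≤ f ξ)
    (hsub : ∀ i, (ξhat i ≠ 0 → αhat i = Real.sign (ξhat i)) ∧ |αhat i| ≤ 1)
    (hstat : ∀ i, ∑ t, X t i * (y t - X.mulVec ξhat t) = lam * αhat i)
    (hrank : LinearIndependent ℝ
      (fun i : {i : Fin m // |αhat i| = 1} => fun t => X t i.1)) :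
    ∀ ξ, (∀ ξ', f ξ ≤ f ξ') → ξ = ξhat := by
  classical
  intro ξ hξmin
  have hfe : f ξ = f ξhat := le_antisymm (hξmin ξhat) (hmin ξ)
  have hmv : ∀ (v : Fin m → ℝ) t, X.mulVec v t = ∑ i, X t i * v i := by
    intro v t; simp [Matrix.mulVec, dotProduct]
  set d : Fin m → ℝ := fun i => ξ i - ξhat i with hd
  have hdlin : ∀ t, X.mulVec d t = X.mulVec ξ t - X.mulVec ξhat t := by
    intro t
    simp only [hmv, hd, mul_sub, Finset.sum_sub_distrib]
  set ζ : Fin m → ℝ := fun i => (ξ i + ξhat i) / 2 with hζ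
  have hζlin : ∀ t, X.mulVec ζ t = (X.mulVec ξ t + X.mulVec ξhat t) / 2 := by
    intro t
    simp only [hmv, hζ]
    rw [← Finset.sum_add_distrib, Finset.sum_div]
    apply Finset.sum_congr rfl; intro i _; ring
  set c : ℝ := 1 / (2 * (n : ℝ)) with hc
  have hc0 : (0:ℝ) ≤ c := by positivity
  set S : ℝ := ∑ t, (X.mulVec d t) ^ 2 with hS
  have hS0 : (0:ℝ) ≤ S := Finset.sum_nonneg fun t _ => sq_nonneg _
  -- quadratic midpoint identity
  have hquad : ∑ t, (y t - X.mulVec ζ t) ^ 2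
      = ∑ t, ((y t - X.mulVec ξ t) ^ 2 / 2 + (y t - X.mulVec ξhat t) ^ 2 / 2
          - (X.mulVec d t) ^ 2 / 4) := by
    apply Finset.sum_congr rfl; intro t _
    rw [hζlin t, hdlin t]; ring
  have hquad' : ∑ t, (y t - X.mulVec ζ t) ^ 2
      = (∑ t, (y t - X.mulVec ξ t) ^ 2) / 2 + (∑ t, (y t - X.mulVec ξhat t) ^ 2) / 2
        - S / 4 := by
    rw [hquad, hS]
    rw [Finset.sum_sub_distrib, Finset.sum_add_distrib, Finset.sum_div, Finset.sum_div,
      Finset.sum_div]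
  -- ℓ¹ midpoint inequality
  have hl1 : ∑ i, |ζ i| ≤ (∑ i, |ξ i|) / 2 + (∑ i, |ξhat i|) / 2 := by
    have step : ∀ i, |ζ i| ≤ |ξ i| / 2 + |ξhat i| / 2 := by
      intro i
      have h1 : |ζ i| = |ξ i + ξhat i| / 2 := by
        rw [hζ]; simp only; rw [abs_div, abs_two]
      have h2 : |ξ i + ξhat i| ≤ |ξ i| + |ξhat i| := abs_add_le _ _
      rw [h1]; linarith
    calc ∑ i, |ζ i| ≤ ∑ i, (|ξ i| / 2 + |ξhat i| / 2) :=
          Finset.sum_le_sum fun i _ => step i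
      _ = (∑ i, |ξ i|) / 2 + (∑ i, |ξhat i|) / 2 := by
          rw [Finset.sum_add_distrib, ← Finset.sum_div, ← Finset.sum_div]
  set gap : ℝ := ((∑ i, |ξ i|) / 2 + (∑ i, |ξhat i|) / 2) - ∑ i, |ζ i| with hgap
  have hgap0 : (0:ℝ) ≤ gap := by rw [hgap]; linarith
  have hcS : c * S = 0 := by
    have h1 := hmin ζ
    rw [hf ζ, hf ξhat, hquad'] at h1
    have h2 : f ξ = f ξhat := hfe
    rw [hf ξ, hf ξhat] at h2
    have hlg : 0 ≤ lam * gap := mul_nonneg hlam.le hgap0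
    have hcS0 : 0 ≤ c * S := mul_nonneg hc0 hS0
    nlinarith [mul_le_mul_of_nonneg_left hl1 hlam.le]
  have hXd : ∀ t, X.mulVec d t = 0 := by
    intro t
    have hn : (0:ℝ) < n := by exact_mod_cast t.pos
    have hcpos : (0:ℝ) < c := by rw [hc]; positivity
    have hSz : S = 0 := by
      rcases mul_eq_zero.mp hcS with h | h
      · exact absurd h (ne_of_gt hcpos)
      · exact h
    have h := (Finset.sum_eq_zero_iff_of_nonneg
      (fun t _ => sq_nonneg (X.mulVec d t))).mp hSz t (Finset.mem_univ t)
    exact sq_eq_zero_iff.mp h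
  -- equal ℓ¹ norms
  have hL : ∑ i, |ξ i| = ∑ i, |ξhat i| := by
    have hQ : ∑ t, (y t - X.mulVec ξ t) ^ 2 = ∑ t, (y t - X.mulVec ξhat t) ^ 2 := by
      apply Finset.sum_congr rfl; intro t _
      have := hdlin t
      rw [hXd t] at this
      have : X.mulVec ξ t = X.mulVec ξhat t := by linarith
      rw [this]
    have h2 := hfe
    rw [hf ξ, hf ξhat, hQ] at h2
    have := mul_left_cancel₀ (ne_of_gt hlam) (by linarith : lam * ∑ i, |ξ i| = lam * ∑ i, |ξhat i|)
    exact this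
  -- stationarity gives ∑ αhat i * d i = 0
  have hαd : ∑ i, αhat i * d i = 0 := by
    have h1 : lam * ∑ i, αhat i * d i
        = ∑ t, (X.mulVec d t) * (y t - X.mulVec ξhat t) := by
      rw [Finset.mul_sum]
      calc ∑ i, lam * (αhat i * d i)
          = ∑ i, (∑ t, X t i * (y t - X.mulVec ξhat t)) * d i := by
            apply Finset.sum_congr rfl; intro i _; rw [hstat i]; ring
        _ = ∑ i, ∑ t, X t i * (y t - X.mulVec ξhat t) * d i := by
            apply Finset.sum_congr rfl; intro i _; rw [Finset.sum_mul]
        _ = ∑ t, ∑ i, X t i * (y t - X.mulVec ξhat t) * d i := Finset.sum_comm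
        _ = ∑ t, (X.mulVec d t) * (y t - X.mulVec ξhat t) := by
            apply Finset.sum_congr rfl; intro t _
            rw [hmv d t, Finset.sum_mul]
            apply Finset.sum_congr rfl; intro i _; ring
    have h2 : lam * ∑ i, αhat i * d i = 0 := by
      rw [h1]
      apply Finset.sum_eq_zero; intro t _; rw [hXd t, zero_mul]
    exact (mul_eq_zero.mp h2).resolve_left (ne_of_gt hlam)
  -- αhat i * ξhat i = |ξhat i|
  have hterm : ∀ i, αhat i * ξhat i = |ξhat i| := by
    intro i
    by_cases h : ξhat i = 0
    · simp [h]
    · rw [(hsub i).1 h]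
      rcases lt_or_gt_of_ne h with hlt | hgt
      · rw [Real.sign_of_neg hlt, abs_of_neg hlt]; ring
      · rw [Real.sign_of_pos hgt, abs_of_pos hgt]; ring
  -- termwise equality αhat i * ξ i = |ξ i|
  have hsum_eq : ∑ i, αhat i * ξ i = ∑ i, |ξ i| := by
    have h1 : ∑ i, αhat i * ξ i = ∑ i, αhat i * ξhat i + ∑ i, αhat i * d i := by
      rw [← Finset.sum_add_distrib]
      apply Finset.sum_congr rfl; intro i _
      rw [hd]; ring
    rw [h1, hαd, add_zero, hL]
    apply Finset.sum_congr rfl; intro i _; exact hterm i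
  have htw : ∀ i, αhat i * ξ i = |ξ i| := by
    have hz : ∑ i, (|ξ i| - αhat i * ξ i) = 0 := by
      rw [Finset.sum_sub_distrib, hsum_eq, sub_self]
    have hnn : ∀ i ∈ Finset.univ, (0:ℝ) ≤ |ξ i| - αhat i * ξ i := by
      intro i _
      have : αhat i * ξ i ≤ |αhat i| * |ξ i| := (le_abs_self _).trans_eq (abs_mul _ _)
      have h2 : |αhat i| * |ξ i| ≤ 1 * |ξ i| :=
        mul_le_mul_of_nonneg_right (hsub i).2 (abs_nonneg _)
      linarith
    intro i
    have := (Finset.sum_eq_zero_iff_of_nonneg hnn).mp hz i (Finset.mem_univ i)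
    linarith
  -- off-equicorrelation components vanish
  have hξ0 : ∀ i, |αhat i| ≠ 1 → ξ i = 0 := by
    intro i h
    by_contra hne
    have h1 : |αhat i| < 1 := lt_of_le_of_ne (hsub i).2 h
    have h2 : αhat i * ξ i ≤ |αhat i| * |ξ i| := (le_abs_self _).trans_eq (abs_mul _ _)
    have h3 : |αhat i| * |ξ i| < 1 * |ξ i| :=
      mul_lt_mul_of_pos_right h1 (abs_pos.mpr hne)
    have := htw i
    linarith
  have hξhat0 : ∀ i, |αhat i| ≠ 1 → ξhat i = 0 := by
    intro i h
    by_contra hne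
    apply h
    rw [(hsub i).1 hne]
    rcases lt_or_gt_of_ne hne with hlt | hgt
    · rw [Real.sign_of_neg hlt]; norm_num
    · rw [Real.sign_of_pos hgt]; norm_num
  have hd0 : ∀ i, |αhat i| ≠ 1 → d i = 0 := by
    intro i h; rw [hd]; simp only
    rw [hξ0 i h, hξhat0 i h, sub_zero]
  -- use linear independence
  have hzero : ∑ i : {i : Fin m // |αhat i| = 1},
      d i.1 • (fun t => X t i.1) = (0 : Fin n → ℝ) := by
    funext t
    have h := hXd t
    rw [hmv d t] at h
    simp only [Finset.sum_apply, Pi.smul_apply, smul_eq_mul, Pi.zero_apply]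
    have e1 : ∑ i : {i : Fin m // |αhat i| = 1}, d i.1 * X t i.1
        = ∑ i ∈ Finset.univ.filter (fun i => |αhat i| = 1), d i * X t i :=
      (Finset.sum_subtype _ (by simp) (fun i => d i * X t i)).symm
    have e2 : ∑ i ∈ Finset.univ.filter (fun i => |αhat i| = 1), d i * X t i
        = ∑ i, d i * X t i :=
      Finset.sum_subset (Finset.filter_subset _ _) (fun i _ hi => by
        rw [hd0 i (by simpa using hi), zero_mul])
    rw [e1, e2, ← h]
    exact Finset.sum_congr rfl fun i _ => mul_comm _ _
  have hfin := Fintype.linearIndependent_iff.mp hrank (fun i => d i.1) hzero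
  funext i
  by_cases h : |αhat i| = 1
  · have := hfin ⟨i, h⟩
    have : ξ i - ξhat i = 0 := this
    linarith
  · rw [hξ0 i h, hξhat0 i h]
end

section
/- The fitted vector X̄ξ̂ of a lasso solution is unique: if ξ̂₁ and ξ̂₂ are both minimizers of (1/(2n))‖y − X̄ξ‖² + λ‖ξ‖₁ with λ > 0, then X̄ξ̂₁ = X̄ξ̂₂. -/
open Finset

/-- the fitted vector `X̄ξ̂` of a lasso solution is unique. -/
theorem lasso_fit_unique
    {n m : ℕ} (X : Matrix (Fin n) (Fin m) ℝ) (y : Fin n → ℝ) (lam : ℝ)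
    (hlam : 0 < lam)
    (f : (Fin m → ℝ) → ℝ)
    (hf : ∀ ξ, f ξ = (1 / (2 * (n : ℝ))) * ∑ t, (y t - X.mulVec ξ t) ^ 2
        + lam * ∑ i, |ξ i|)
    (ξ1 ξ2 : Fin m → ℝ)
    (h1 : ∀ ξ, f ξ1 ≤ f ξ) (h2 : ∀ ξ, f ξ2 ≤ f ξ) :
    X.mulVec ξ1 = X.mulVec ξ2 := by
  rcases Nat.eq_zero_or_pos n with hn | hn
  · subst hn; funext t; exact t.elim0
  by_contra hne
  set v1 := X.mulVec ξ1 with hv1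
  set v2 := X.mulVec ξ2 with hv2
  have heq : f ξ1 = f ξ2 := le_antisymm (h1 ξ2) (h2 ξ1)
  set ξm : Fin m → ℝ := fun i => (ξ1 i + ξ2 i) / 2 with hξm
  have hvm : ∀ t, X.mulVec ξm t = (v1 t + v2 t) / 2 := by
    intro t
    simp only [hv1, hv2, Matrix.mulVec, dotProduct, hξm]
    rw [← Finset.sum_add_distrib, Finset.sum_div]
    exact Finset.sum_congr rfl fun j _ => by ring
  have hc : (0 : ℝ) < 1 / (2 * (n : ℝ)) := by
    apply div_pos one_pos
    have : (0 : ℝ) < (n : ℝ) := by exact_mod_cast hn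
    linarith
  set c : ℝ := 1 / (2 * (n : ℝ)) with hcdef
  -- quadratic part
  have hquad : ∑ t, (y t - X.mulVec ξm t) ^ 2
      = (∑ t, (y t - v1 t) ^ 2 + ∑ t, (y t - v2 t) ^ 2) / 2
        - (1 / 4) * ∑ t, (v1 t - v2 t) ^ 2 := by
    rw [← Finset.sum_add_distrib, Finset.sum_div, Finset.mul_sum,
      ← Finset.sum_sub_distrib]
    refine Finset.sum_congr rfl fun t _ => ?_
    rw [hvm t]; ring
  -- difference is positive
  have hD : 0 < ∑ t, (v1 t - v2 t) ^ 2 := by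
    have hex : ∃ t, v1 t ≠ v2 t := by
      by_contra h
      push_neg at h
      exact hne (funext h)
    obtain ⟨t0, ht0⟩ := hex
    have hnz : v1 t0 - v2 t0 ≠ 0 := sub_ne_zero.mpr ht0
    have hpos : 0 < (v1 t0 - v2 t0) ^ 2 :=
      lt_of_le_of_ne (sq_nonneg _) (Ne.symm (pow_ne_zero 2 hnz))
    calc 0 < (v1 t0 - v2 t0) ^ 2 := hpos
      _ ≤ ∑ t, (v1 t - v2 t) ^ 2 :=
        Finset.single_le_sum (f := fun t => (v1 t - v2 t) ^ 2)
          (fun t _ => sq_nonneg _) (Finset.mem_univ t0)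
  -- l1 part
  have hl1 : ∑ i, |ξm i| ≤ (∑ i, |ξ1 i| + ∑ i, |ξ2 i|) / 2 := by
    rw [← Finset.sum_add_distrib, Finset.sum_div]
    refine Finset.sum_le_sum fun i _ => ?_
    have := abs_add_le (ξ1 i) (ξ2 i)
    have h2 : |ξm i| = |ξ1 i + ξ2 i| / 2 := by
      simp [hξm, abs_div]
    rw [h2]
    linarith
  have hfm : f ξm < f ξ1 := by
    have e1 := hf ξ1
    have e2 := hf ξ2
    have em := hf ξm
    rw [← hv1] at e1
    rw [← hv2] at e2
    rw [em, hquad]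
    have hl1' : lam * ∑ i, |ξm i| ≤ lam * ((∑ i, |ξ1 i| + ∑ i, |ξ2 i|) / 2) :=
      mul_le_mul_of_nonneg_left hl1 (le_of_lt hlam)
    have hcd : 0 < c * ((1 / 4) * ∑ t, (v1 t - v2 t) ^ 2) := by positivity
    have : f ξ1 = (f ξ1 + f ξ2) / 2 := by linarith
    rw [this, e1, e2]
    nlinarith [hc, hcd]
  exact absurd (h1 ξm) (not_le.mpr hfm)
end

section
/- If the columns of X̄ are affinely independent with negation (AIN), then for any optimal lasso solution with equicorrelation set A, the submatrix X̄_A has full column rank. -/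
open Finset

/-- A family of vectors is *Affinely Independent with Negation* (AIN) if no
member can be written as a signed weighted combination of the others with
weights summing to 1. -/
def AIN {n : ℕ} {ι : Type*} [Fintype ι] [DecidableEq ι]
    (v : ι → Fin n → ℝ) : Prop :=
  ¬ ∃ (j : ι) (s w : ι → ℝ),
      (∀ i, s i = 1 ∨ s i = -1) ∧
      (∑ i ∈ Finset.univ.erase j, w i) = 1 ∧
      v j = ∑ i ∈ Finset.univ.erase j, (w i * s i) • v i

/-- if the columns of `X̄` are AIN, then for any optimal lasso
solution the equicorrelation submatrix `X̄_A` has full column rank. -/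
theorem equicorrelation_fullRank_of_AIN
    {n m : ℕ} (X : Matrix (Fin n) (Fin m) ℝ) (y : Fin n → ℝ) (lam : ℝ)
    (hlam : 0 < lam)
    (hAIN : AIN (fun i : Fin m => fun t => X t i))
    (f : (Fin m → ℝ) → ℝ)
    (hf : ∀ ξ, f ξ = (1 / (2 * (n : ℝ))) * ∑ t, (y t - X.mulVec ξ t) ^ 2
        + lam * ∑ i, |ξ i|)
    (ξhat αhat : Fin m → ℝ)
    (hmin : ∀ ξ, f ξhat ≤ f ξ)
    (hsub : ∀ i, (ξhat i ≠ 0 → αhat i = Real.sign (ξhat i)) ∧ |αhat i| ≤ 1)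
    (hstat : ∀ i, ∑ t, X t i * (y t - X.mulVec ξhat t) = lam * αhat i) :
    LinearIndependent ℝ
      (fun i : {i : Fin m // |αhat i| = 1} => fun t => X t i.1) := by
  classical
  by_contra hli
  rw [Fintype.not_linearIndependent_iff] at hli
  obtain ⟨g, hg, j, hj⟩ := hli
  -- c extends g by zero
  set c : Fin m → ℝ := fun i => if h : |αhat i| = 1 then g ⟨i, h⟩ else 0 with hc
  have hsum : ∀ (φ : Fin m → ℝ),
      ∑ i, c i * φ i = ∑ i : {i : Fin m // |αhat i| = 1}, g i * φ i.1 := by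
    intro φ
    rw [← Finset.sum_filter_of_ne (p := fun i => |αhat i| = 1)
      (f := fun i => c i * φ i)
      (by intro x _ hx; by_contra h; simp [hc, h] at hx)]
    rw [Finset.sum_subtype (p := fun i => |αhat i| = 1) (Finset.univ.filter fun i => |αhat i| = 1)
      (by simp) (fun i => c i * φ i)]
    refine Finset.sum_congr rfl fun i _ => ?_
    simp [hc, i.2]
  have hcj : c j.1 = g j := by simp [hc, j.2]
  -- evaluation of the linear dependence
  have h0 : ∀ t, ∑ i : {i : Fin m // |αhat i| = 1}, g i * X t i.1 = 0 := by
    intro t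
    have := congrFun hg t
    simpa [Finset.sum_apply] using this
  have h0' : ∀ t, ∑ i, c i * X t i = 0 := fun t => (hsum _).trans (h0 t)
  -- ∑ g αhat = 0
  have key : lam * ∑ i : {i : Fin m // |αhat i| = 1}, g i * αhat i.1 = 0 := by
    have : ∑ i : {i : Fin m // |αhat i| = 1}, g i * (lam * αhat i.1) = 0 := by
      calc ∑ i : {i : Fin m // |αhat i| = 1}, g i * (lam * αhat i.1)
          = ∑ i : {i : Fin m // |αhat i| = 1},
              g i * ∑ t, X t i.1 * (y t - X.mulVec ξhat t) := by
            simp_rw [hstat]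
        _ = ∑ t, ∑ i : {i : Fin m // |αhat i| = 1},
              (g i * X t i.1) * (y t - X.mulVec ξhat t) := by
            simp_rw [Finset.mul_sum]
            rw [Finset.sum_comm]
            simp_rw [mul_assoc]
        _ = 0 := by
            simp_rw [← Finset.sum_mul]
            simp [h0]
    rw [Finset.mul_sum]
    rw [← this]
    exact Finset.sum_congr rfl fun i _ => by ring
  have halpha : ∑ i : {i : Fin m // |αhat i| = 1}, g i * αhat i.1 = 0 := by
    rcases mul_eq_zero.1 key with h | h
    · exact absurd h (ne_of_gt hlam)
    · exact h
  have halpha' : ∑ i, c i * αhat i = 0 := (hsum _).trans halpha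
  -- the sign at j
  set ε : ℝ := αhat j.1 with hε
  have hε1 : ε = 1 ∨ ε = -1 := abs_eq (by norm_num : (0:ℝ) ≤ 1) |>.1 j.2
  have hε2 : ε * ε = 1 := by rcases hε1 with h | h <;> rw [h] <;> ring
  set s : Fin m → ℝ := fun i => if |αhat i| = 1 then ε * αhat i else 1 with hs
  set w : Fin m → ℝ := fun i => (-ε / g j) * (c i * αhat i) with hw
  apply hAIN
  refine ⟨j.1, s, w, ?_, ?_, ?_⟩
  · intro i
    by_cases h : |αhat i| = 1
    · rcases (abs_eq (by norm_num : (0:ℝ) ≤ 1)).1 h with h' | h' <;>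
        rcases hε1 with he | he <;> simp [hs, h, h', he]
    · left; simp [hs, h]
  · have hadd := Finset.add_sum_erase Finset.univ w (Finset.mem_univ j.1)
    have htot : ∑ i, w i = 0 := by
      simp only [hw, ← Finset.mul_sum]
      rw [halpha']; ring
    have hwj : w j.1 = -1 := by
      have h2 : w j.1 = -(ε * ε) * (g j / g j) := by
        simp only [hw, hcj, ← hε]; ring
      rw [h2, hε2, div_self hj]; ring
    rw [htot, hwj] at hadd
    linarith
  · have hai2 : ∀ i : Fin m, |αhat i| = 1 → αhat i * αhat i = 1 := by
      intro i h
      rcases (abs_eq (by norm_num : (0:ℝ) ≤ 1)).1 h with h' | h' <;> rw [h'] <;> ring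
    have hws : ∀ i, w i * s i = -c i / g j := by
      intro i
      by_cases h : |αhat i| = 1
      · have : w i * s i = (-c i / g j) * ((ε * ε) * (αhat i * αhat i)) := by
          simp only [hw, hs, if_pos h]; ring
        rw [this, hε2, hai2 i h]; ring
      · simp [hw, hs, hc, h]
    have herase : ∀ t, ∑ i ∈ Finset.univ.erase j.1, c i * X t i = -(g j * X t j.1) := by
      intro t
      have h1 : c j.1 * X t j.1 + ∑ i ∈ Finset.univ.erase j.1, c i * X t i
          = ∑ i, c i * X t i :=
        Finset.add_sum_erase Finset.univ (fun i => c i * X t i) (Finset.mem_univ j.1)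
      rw [h0' t, hcj] at h1
      linarith
    funext t
    simp only [Finset.sum_apply, Pi.smul_apply, smul_eq_mul]
    simp_rw [hws]
    have : ∑ i ∈ Finset.univ.erase j.1, -c i / g j * X t i
        = (-1 / g j) * ∑ i ∈ Finset.univ.erase j.1, c i * X t i := by
      rw [Finset.mul_sum]
      exact Finset.sum_congr rfl fun i _ => by ring
    rw [this, herase t]
    field_simp
end

section
/- Suppose the columns of X_A are linearly dependent, i.e., X_i = Σ_{j≠i} c_j X_j for some index i and real coefficients c_j, and suppose there exist a vector r and signs α_j ∈ {−1,1} with X_jᵀ r = λ α_j for all j (for some λ > 0). Then Σ_{j≠i} c_j α_i α_j = 1, and hence the columns of X_A are not AIN (witnessed by signs s_j = α_j/α_i and weights w_j = c_j α_i α_j). -/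
open Finset

/-- if `X_i = Σ_{j≠i} c_j X_j` and `X_jᵀ r = λ α_j` with
`α_j ∈ {−1,1}` and `λ > 0`, then `Σ_{j≠i} c_j α_i α_j = 1` and the columns
are not AIN. -/
theorem not_AIN_of_linearDep_equicorrelation {n k : ℕ}
    (v : Fin k → Fin n → ℝ) (i : Fin k) (c : Fin k → ℝ)
    (hdep : v i = ∑ j ∈ Finset.univ.erase i, c j • v j)
    (r : Fin n → ℝ) (lam : ℝ) (hlam : 0 < lam) (α : Fin k → ℝ)
    (hsign : ∀ j, α j = 1 ∨ α j = -1)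
    (hdot : ∀ j, ∑ t, v j t * r t = lam * α j) :
    (∑ j ∈ Finset.univ.erase i, c j * α i * α j = 1) ∧ ¬ AIN v := by
  have hsq : ∀ j, α j * α j = 1 := by
    intro j; rcases hsign j with h | h <;> simp [h]
  have key : ∑ j ∈ Finset.univ.erase i, c j * α j = α i := by
    have hvt : ∀ t, v i t = ∑ j ∈ Finset.univ.erase i, c j * v j t := by
      intro t
      have := congrFun hdep t
      simpa using this
    have h1 : lam * α i = ∑ j ∈ Finset.univ.erase i, c j * (lam * α j) := by
      rw [← hdot i]
      calc ∑ t, v i t * r t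
          = ∑ t, (∑ j ∈ Finset.univ.erase i, c j * v j t) * r t := by
            simp_rw [hvt]
        _ = ∑ j ∈ Finset.univ.erase i, ∑ t, c j * v j t * r t := by
            simp_rw [Finset.sum_mul]
            rw [Finset.sum_comm]
        _ = ∑ j ∈ Finset.univ.erase i, c j * (lam * α j) := by
            refine Finset.sum_congr rfl fun j _ => ?_
            rw [← hdot j, Finset.mul_sum]
            simp_rw [mul_assoc]
    have h2 : lam * α i = lam * ∑ j ∈ Finset.univ.erase i, c j * α j := by
      rw [h1, Finset.mul_sum]
      exact Finset.sum_congr rfl fun j _ => by ring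
    exact (mul_left_cancel₀ hlam.ne' h2).symm
  have part1 : ∑ j ∈ Finset.univ.erase i, c j * α i * α j = 1 := by
    have : ∑ j ∈ Finset.univ.erase i, c j * α i * α j
        = α i * ∑ j ∈ Finset.univ.erase i, c j * α j := by
      rw [Finset.mul_sum]
      exact Finset.sum_congr rfl fun j _ => by ring
    rw [this, key, hsq]
  refine ⟨part1, ?_⟩
  intro h
  refine h ⟨i, fun j => α i * α j, fun j => c j * α i * α j, ?_, part1, ?_⟩
  · intro j
    rcases hsign i with hi | hi <;> rcases hsign j with hj | hj <;>
      simp [hi, hj]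
  · rw [hdep]
    refine Finset.sum_congr rfl fun j _ => ?_
    have : c j * α i * α j * (α i * α j) = c j := by
      calc c j * α i * α j * (α i * α j) = c j * ((α i * α i) * (α j * α j)) := by ring
        _ = c j := by rw [hsq i, hsq j]; ring
    rw [this]
end

section
/- Equivalence of the gLOP problem with a weighted lasso: with X̄ the stacked design matrix, y the stacked targets, and ξ defined by ξ_i = λ_g β_i for i ≤ p and ξ_i = λ_L β_i for i > p (with β = (g, L₁,…,L_κ) stacked), the gLOP objective Σ_k (1/(2n))‖yᵏ − Xᵏ(g+L_k)‖² + λ_g‖g‖₁ + λ_L‖L‖_{1,1} equals (1/(2n))‖y − X̄ξ‖² + ‖ξ‖₁; hence (g, L) minimizes gLOP iff the corresponding ξ minimizes the standard lasso with λ = 1 on design X̄. -/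
open Finset

/-- The stacked gLOP design matrix. -/
noncomputable def glopDesign {n p κ : ℕ} (X : Fin κ → Matrix (Fin n) (Fin p) ℝ)
    (lamg lamL : ℝ) : Matrix (Fin κ × Fin n) (Fin (κ + 1) × Fin p) ℝ :=
  fun r c =>
    if c.1 = 0 then X r.1 r.2 c.2 / lamg
    else if (c.1 : ℕ) = (r.1 : ℕ) + 1 then X r.1 r.2 c.2 / lamL else 0

/-- under the change of variables `ξ_i = λ_g β_i` (global part)
and `ξ_i = λ_L β_i` (local part), the gLOP objective equals the standard lasso
objective with `λ = 1` on the design `X̄`; hence `(g,L)` minimizes gLOP iff the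
corresponding `ξ` minimizes that lasso. -/
theorem glop_weighted_lasso_equiv {n p κ : ℕ}
    (X : Fin κ → Matrix (Fin n) (Fin p) ℝ) (y : Fin κ → Fin n → ℝ)
    (lamg lamL : ℝ) (hg : 0 < lamg) (hL : 0 < lamL)
    (ystack : Fin κ × Fin n → ℝ) (hy : ∀ k t, ystack (k, t) = y k t)
    (G : ((Fin p → ℝ) × (Fin κ → Fin p → ℝ)) → ℝ)
    (hG : ∀ gl : (Fin p → ℝ) × (Fin κ → Fin p → ℝ),
      G gl = (∑ k, (1 / (2 * (n : ℝ))) *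
          ∑ t, (y k t - (X k).mulVec (gl.1 + gl.2 k) t) ^ 2)
        + lamg * ∑ i, |gl.1 i|
        + lamL * ∑ k, ∑ i, |gl.2 k i|)
    (lasso : ((Fin (κ + 1) × Fin p) → ℝ) → ℝ)
    (hlasso : ∀ ξ, lasso ξ = (1 / (2 * (n : ℝ))) *
          ∑ r, (ystack r - (glopDesign X lamg lamL).mulVec ξ r) ^ 2
        + ∑ c, |ξ c|)
    (ξof : ((Fin p → ℝ) × (Fin κ → Fin p → ℝ)) → (Fin (κ + 1) × Fin p) → ℝ)
    (hξ0 : ∀ gl (i : Fin p), ξof gl ((0 : Fin (κ + 1)), i) = lamg * gl.1 i)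
    (hξk : ∀ gl (k : Fin κ) (i : Fin p), ξof gl (k.succ, i) = lamL * gl.2 k i) :
    (∀ gl, G gl = lasso (ξof gl)) ∧
    (∀ gl, (∀ gl', G gl ≤ G gl') ↔ (∀ ξ', lasso (ξof gl) ≤ lasso ξ')) := by
  have hmul : ∀ gl (k : Fin κ) (t : Fin n),
      (glopDesign X lamg lamL).mulVec (ξof gl) (k, t)
        = (X k).mulVec (gl.1 + gl.2 k) t := by
    intro gl k t
    simp only [Matrix.mulVec, dotProduct, glopDesign, Pi.add_apply]
    rw [Fintype.sum_prod_type, Fin.sum_univ_succ]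
    dsimp only
    have h1 : ∑ i, (if (0 : Fin (κ+1)) = 0 then X k t i / lamg
        else if ((0 : Fin (κ+1)) : ℕ) = (k : ℕ) + 1 then X k t i / lamL else 0)
        * ξof gl (0, i) = ∑ i, X k t i * gl.1 i := by
      refine Finset.sum_congr rfl fun i _ => ?_
      rw [hξ0, if_pos rfl]
      field_simp
    have h2 : ∑ j : Fin κ, ∑ i, (if (j.succ : Fin (κ+1)) = 0 then X k t i / lamg
        else if ((j.succ : Fin (κ+1)) : ℕ) = (k : ℕ) + 1 then X k t i / lamL else 0)
        * ξof gl (j.succ, i) = ∑ i, X k t i * gl.2 k i := by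
      rw [Finset.sum_eq_single k]
      · refine Finset.sum_congr rfl fun i _ => ?_
        rw [hξk, if_neg (Fin.succ_ne_zero k), if_pos (by simp)]
        field_simp
      · intro j _ hj
        have hj' : (j : ℕ) ≠ (k : ℕ) := fun h => hj (Fin.ext h)
        refine Finset.sum_eq_zero fun i _ => ?_
        rw [if_neg (Fin.succ_ne_zero j), if_neg (by simp only [Fin.val_succ]; omega),
          zero_mul]
      · intro h; exact absurd (Finset.mem_univ k) h
    rw [h1, h2, ← Finset.sum_add_distrib]
    exact Finset.sum_congr rfl fun i _ => by ring
  have heq : ∀ gl, G gl = lasso (ξof gl) := by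
    intro gl
    rw [hG, hlasso]
    have hsq : ∑ r : Fin κ × Fin n, (ystack r - (glopDesign X lamg lamL).mulVec (ξof gl) r) ^ 2
        = ∑ k, ∑ t, (y k t - (X k).mulVec (gl.1 + gl.2 k) t) ^ 2 := by
      rw [Fintype.sum_prod_type]
      exact Finset.sum_congr rfl fun k _ => Finset.sum_congr rfl fun t _ => by
        rw [hy, hmul]
    have habs : ∑ c : Fin (κ+1) × Fin p, |ξof gl c|
        = lamg * ∑ i, |gl.1 i| + lamL * ∑ k, ∑ i, |gl.2 k i| := by
      rw [Fintype.sum_prod_type, Fin.sum_univ_succ]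
      congr 1
      · rw [Finset.mul_sum]
        exact Finset.sum_congr rfl fun i _ => by
          rw [hξ0, abs_mul, abs_of_pos hg]
      · rw [Finset.mul_sum]
        refine Finset.sum_congr rfl fun j _ => ?_
        rw [Finset.mul_sum]
        exact Finset.sum_congr rfl fun i _ => by
          rw [hξk, abs_mul, abs_of_pos hL]
    rw [hsq, habs, Finset.mul_sum, add_assoc, ← Finset.mul_sum]
  have hsurj : ∀ ξ' : (Fin (κ + 1) × Fin p) → ℝ, ∃ gl', ξof gl' = ξ' := by
    intro ξ'
    refine ⟨(fun i => ξ' (0, i) / lamg, fun k i => ξ' (k.succ, i) / lamL), ?_⟩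
    funext c
    obtain ⟨j, i⟩ := c
    induction j using Fin.cases with
    | zero => rw [hξ0]; exact mul_div_cancel₀ _ hg.ne'
    | succ k => rw [hξk]; exact mul_div_cancel₀ _ hL.ne'
  refine ⟨heq, fun gl => ⟨fun h ξ' => ?_, fun h gl' => ?_⟩⟩
  · obtain ⟨gl', rfl⟩ := hsurj ξ'
    rw [← heq, ← heq]; exact h gl'
  · rw [heq, heq]; exact h _
end
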